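/- There exist two MatP instances I_A and I_B on the same bipartite graph, differing only in the preference order of a single agent and only by a swap of two adjacent alternatives in that agent's preference order, such that there exists a matching that is popular for both I_A and I_B, but no matching is dominant for both I_A and I_B. Consequently, a maximum-size robust popular matching need not be a robust dominant matching. -/
import Mathlib


open Classical

/-- An instance of matching under preferences (MatP): a bipartite graph on
workers `W` and firms `F` together with, for each agent, a strict linear order
on its neighbors (`pref x y z` means `x` strictly prefers `y` to `z`). -/
structure MatP (α : Type*) where
  W : Finset α
  F : Finset α
  disjWF : Disjoint W F
  adj : α → α → Prop
  adj_symm : ∀ x y, adj x y → adj y x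
  adj_loopless : ∀ x, ¬ adj x x
  adj_bipartite : ∀ x y, adj x y → (x ∈ W ∧ y ∈ F) ∨ (x ∈ F ∧ y ∈ W)
  pref : α → α → α → Prop
  pref_adj : ∀ x y z, pref x y z → adj x y ∧ adj x z
  pref_trans : ∀ x y z w, pref x y z → pref x z w → pref x y w
  pref_irrefl : ∀ x y, ¬ pref x y y
  pref_total : ∀ x y z, adj x y → adj x z → y ≠ z → pref x y z ∨ pref x z y

/-- `M` is a matching of instance `I`, encoded as a symmetric partial partner
function: `M x = some y` means the edge `{x,y}` belongs to the matching. -/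
def IsMatching {α : Type*} (I : MatP α) (M : α → Option α) : Prop :=
  (∀ x y, M x = some y → I.adj x y) ∧ (∀ x y, M x = some y → M y = some x)

/-- Agent `x` prefers (partner) option `o` to option `o'`:
being matched beats being unmatched, and among partners `x` uses `I.pref`. -/
def Better {α : Type*} (I : MatP α) (x : α) : Option α → Option α → Prop
  | some _, none => True
  | some y, some z => I.pref x y z
  | none, _ => False

/-- The vote of agent `x` between partner options `o` and `o'`. -/
noncomputable def voteO {α : Type*} (I : MatP α) (x : α) (o o' : Option α) : ℤ :=
  if Better I x o o' then 1 else if Better I x o' o then -1 else 0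

/-- Popularity margin `Δ^I(M,M')`: the sum of all agents' votes. -/
noncomputable def margin {α : Type*} [DecidableEq α]
    (I : MatP α) (M M' : α → Option α) : ℤ :=
  ∑ x ∈ I.W ∪ I.F, voteO I x (M x) (M' x)

/-- `M` is popular for `I`: it does not lose against any matching. -/
def Popular {α : Type*} [DecidableEq α] (I : MatP α) (M : α → Option α) : Prop :=
  ∀ M', IsMatching I M' → 0 ≤ margin I M M'

/-- Number of matched agents: twice the number of edges of the matching. -/
noncomputable def msize {α : Type*} [Fintype α] (M : α → Option α) : ℕ :=
  (Finset.univ.filter fun x => (M x).isSome).card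

/-- `M` is dominant for `I`: popular and strictly defeats every larger matching. -/
def Dominant {α : Type*} [Fintype α] [DecidableEq α]
    (I : MatP α) (M : α → Option α) : Prop :=
  Popular I M ∧ ∀ M', IsMatching I M' → msize M < msize M' → 0 < margin I M M'

/-- `IA` and `IB` are MatP instances on the same bipartite graph that differ
only in the preference order of the single agent `x`. -/
def SameExcept {α : Type*} (IA IB : MatP α) (x : α) : Prop :=
  IA.W = IB.W ∧ IA.F = IB.F ∧ IA.adj = IB.adj ∧
  ∀ z, z ≠ x → ∀ u v, (IA.pref z u v ↔ IB.pref z u v)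

section Counterexample

/-- Adjacency of the counterexample graph (workers 0,1; firms 2,3,4):
worker 0 is adjacent to all three firms, worker 1 only to firm 2. -/
def adjB : Fin 5 → Fin 5 → Bool := fun x y =>
  match x.val, y.val with
  | 0, 2 => true | 0, 3 => true | 0, 4 => true | 1, 2 => true
  | 2, 0 => true | 3, 0 => true | 4, 0 => true | 2, 1 => true
  | _, _ => false

/-- Ranks for instance A (agent 0 ranks: 2 ≻ 3 ≻ 4). -/
def rkA : Fin 5 → Fin 5 → ℕ := fun x y =>
  if x = 0 then (match y.val with | 2 => 0 | 3 => 1 | 4 => 2 | 0 => 3 | _ => 4)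
  else y.val

/-- Ranks for instance B (agent 0 ranks: 2 ≻ 4 ≻ 3). -/
def rkB : Fin 5 → Fin 5 → ℕ := fun x y =>
  if x = 0 then (match y.val with | 2 => 0 | 4 => 1 | 3 => 2 | 0 => 3 | _ => 4)
  else y.val

/-- Preferences induced by a rank function. -/
def prefP (rk : Fin 5 → Fin 5 → ℕ) (x y z : Fin 5) : Prop :=
  adjB x y = true ∧ adjB x z = true ∧ rk x y < rk x z

instance (rk : Fin 5 → Fin 5 → ℕ) (x y z : Fin 5) : Decidable (prefP rk x y z) := by
  unfold prefP; infer_instance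

def mkInst (rk : Fin 5 → Fin 5 → ℕ)
    (h1 : ∀ x y z w, prefP rk x y z → prefP rk x z w → prefP rk x y w)
    (h2 : ∀ x y, ¬ prefP rk x y y)
    (h3 : ∀ x y z, adjB x y = true → adjB x z = true → y ≠ z →
      prefP rk x y z ∨ prefP rk x z y) : MatP (Fin 5) where
  W := {0, 1}
  F := {2, 3, 4}
  disjWF := by decide
  adj := fun x y => adjB x y = true
  adj_symm := by decide
  adj_loopless := by decide
  adj_bipartite := by decide
  pref := prefP rk
  pref_adj := fun _ _ _ h => ⟨h.1, h.2.1⟩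
  pref_trans := h1
  pref_irrefl := h2
  pref_total := h3

def instA : MatP (Fin 5) := mkInst rkA (by decide) (by decide) (by decide)
def instB : MatP (Fin 5) := mkInst rkB (by decide) (by decide) (by decide)

/-- Build a partner function from five option values. -/
def fn (a0 a1 a2 a3 a4 : Option (Fin 5)) : Fin 5 → Option (Fin 5) := fun x =>
  match x.val with | 0 => a0 | 1 => a1 | 2 => a2 | 3 => a3 | _ => a4

/-- The common popular matching {0-2}. -/
def M0f : Fin 5 → Option (Fin 5) := fn (some 2) none (some 0) none none
/-- The unique dominant matching of instance A: {0-3, 1-2}. -/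
def MAf : Fin 5 → Option (Fin 5) := fn (some 3) (some 2) (some 1) (some 0) none
/-- The unique dominant matching of instance B: {0-4, 1-2}. -/
def MBf : Fin 5 → Option (Fin 5) := fn (some 4) (some 2) (some 1) none (some 0)

def IsMatchC (M : Fin 5 → Option (Fin 5)) : Prop :=
  ∀ x y, M x = some y → adjB x y = true ∧ M y = some x

instance (M : Fin 5 → Option (Fin 5)) : Decidable (IsMatchC M) := by
  unfold IsMatchC; infer_instance

def betterB (rk : Fin 5 → Fin 5 → ℕ) (x : Fin 5) :
    Option (Fin 5) → Option (Fin 5) → Bool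
  | some y, some z => adjB x y && adjB x z && decide (rk x y < rk x z)
  | some _, none => true
  | none, _ => false

def voteC (rk : Fin 5 → Fin 5 → ℕ) (x : Fin 5) (o o' : Option (Fin 5)) : ℤ :=
  if betterB rk x o o' then 1 else if betterB rk x o' o then -1 else 0

def marginC (rk : Fin 5 → Fin 5 → ℕ) (M M' : Fin 5 → Option (Fin 5)) : ℤ :=
  voteC rk 0 (M 0) (M' 0) + voteC rk 1 (M 1) (M' 1) + voteC rk 2 (M 2) (M' 2) +
    voteC rk 3 (M 3) (M' 3) + voteC rk 4 (M 4) (M' 4)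

lemma better_iff (I : MatP (Fin 5)) (rk : Fin 5 → Fin 5 → ℕ)
    (hpref : I.pref = prefP rk) (x : Fin 5) (o o' : Option (Fin 5)) :
    Better I x o o' ↔ betterB rk x o o' = true := by
  cases o with
  | none => simp [Better, betterB]
  | some y =>
    cases o' with
    | none => simp [Better, betterB]
    | some z =>
      simp [Better, betterB, hpref, prefP, Bool.and_eq_true, decide_eq_true_eq,
        and_assoc]

lemma vote_eq (I : MatP (Fin 5)) (rk : Fin 5 → Fin 5 → ℕ)
    (hpref : I.pref = prefP rk) (x : Fin 5) (o o' : Option (Fin 5)) :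
    voteO I x o o' = voteC rk x o o' := by
  unfold voteO voteC
  rw [if_congr (better_iff I rk hpref x o o') rfl
    (if_congr (better_iff I rk hpref x o' o) rfl rfl)]

lemma margin_eq (I : MatP (Fin 5)) (rk : Fin 5 → Fin 5 → ℕ)
    (hpref : I.pref = prefP rk) (hWF : I.W ∪ I.F = Finset.univ)
    (M M' : Fin 5 → Option (Fin 5)) :
    margin I M M' = marginC rk M M' := by
  unfold margin
  rw [hWF]
  have h : ∀ x : Fin 5, voteO I x (M x) (M' x) = voteC rk x (M x) (M' x) :=
    fun x => vote_eq I rk hpref x (M x) (M' x)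
  rw [Fin.sum_univ_five, h 0, h 1, h 2, h 3, h 4]
  rfl

lemma fn_ext (M : Fin 5 → Option (Fin 5)) :
    fn (M 0) (M 1) (M 2) (M 3) (M 4) = M := by
  funext x; fin_cases x <;> rfl

lemma isMatchC_of (I : MatP (Fin 5)) (hadj : I.adj = fun x y => adjB x y = true)
    (M : Fin 5 → Option (Fin 5)) (h : IsMatching I M) : IsMatchC M := by
  intro x y e
  refine ⟨?_, h.2 x y e⟩
  have := h.1 x y e
  rw [hadj] at this
  exact this

def tup : Option (Fin 5) → Option (Fin 5) → Option (Fin 5) → Option (Fin 5) →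
    Option (Fin 5) → List (Option (Fin 5)) := fun a0 a1 a2 a3 a4 => [a0, a1, a2, a3, a4]

set_option maxHeartbeats 8000000 in
/-- Classification (by exhaustive check): the counterexample graph has exactly
seven matchings. -/
lemma classifyT : ∀ a0 a1 a2 a3 a4 : Option (Fin 5), IsMatchC (fn a0 a1 a2 a3 a4) →
    (tup a0 a1 a2 a3 a4 = tup none none none none none ∨
     tup a0 a1 a2 a3 a4 = tup (some 2) none (some 0) none none ∨
     tup a0 a1 a2 a3 a4 = tup (some 3) none none (some 0) none ∨
     tup a0 a1 a2 a3 a4 = tup (some 4) none none none (some 0) ∨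
     tup a0 a1 a2 a3 a4 = tup none (some 2) (some 1) none none ∨
     tup a0 a1 a2 a3 a4 = tup (some 3) (some 2) (some 1) (some 0) none ∨
     tup a0 a1 a2 a3 a4 = tup (some 4) (some 2) (some 1) none (some 0)) := by decide

lemma tup_to_fn (M : Fin 5 → Option (Fin 5)) (b0 b1 b2 b3 b4 : Option (Fin 5))
    (ht : tup (M 0) (M 1) (M 2) (M 3) (M 4) = tup b0 b1 b2 b3 b4) :
    M = fn b0 b1 b2 b3 b4 := by
  simp only [tup, List.cons.injEq, and_true] at ht
  obtain ⟨e0, e1, e2, e3, e4⟩ := ht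
  rw [← fn_ext M, e0, e1, e2, e3, e4]

lemma classify (M : Fin 5 → Option (Fin 5)) (h : IsMatchC M) :
    M = fn none none none none none ∨ M = M0f ∨
    M = fn (some 3) none none (some 0) none ∨
    M = fn (some 4) none none none (some 0) ∨
    M = fn none (some 2) (some 1) none none ∨
    M = MAf ∨ M = MBf := by
  have h' : IsMatchC (fn (M 0) (M 1) (M 2) (M 3) (M 4)) := by rw [fn_ext]; exact h
  rcases classifyT (M 0) (M 1) (M 2) (M 3) (M 4) h' with ht|ht|ht|ht|ht|ht|ht
  · exact Or.inl (tup_to_fn M _ _ _ _ _ ht)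
  · exact Or.inr (Or.inl (tup_to_fn M _ _ _ _ _ ht))
  · exact Or.inr (Or.inr (Or.inl (tup_to_fn M _ _ _ _ _ ht)))
  · exact Or.inr (Or.inr (Or.inr (Or.inl (tup_to_fn M _ _ _ _ _ ht))))
  · exact Or.inr (Or.inr (Or.inr (Or.inr (Or.inl (tup_to_fn M _ _ _ _ _ ht)))))
  · exact Or.inr (Or.inr (Or.inr (Or.inr (Or.inr (Or.inl (tup_to_fn M _ _ _ _ _ ht))))))
  · exact Or.inr (Or.inr (Or.inr (Or.inr (Or.inr (Or.inr (tup_to_fn M _ _ _ _ _ ht))))))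

lemma hWFA : instA.W ∪ instA.F = Finset.univ := by decide
lemma hWFB : instB.W ∪ instB.F = Finset.univ := by decide

lemma isMatchingA_M0f : IsMatching instA M0f := by
  have h1 : ∀ x y : Fin 5, M0f x = some y → adjB x y = true := by decide
  have h2 : ∀ x y : Fin 5, M0f x = some y → M0f y = some x := by decide
  exact ⟨h1, h2⟩

lemma isMatchingA_MAf : IsMatching instA MAf := by
  have h1 : ∀ x y : Fin 5, MAf x = some y → adjB x y = true := by decide
  have h2 : ∀ x y : Fin 5, MAf x = some y → MAf y = some x := by decide
  exact ⟨h1, h2⟩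

lemma isMatchingB_MBf : IsMatching instB MBf := by
  have h1 : ∀ x y : Fin 5, MBf x = some y → adjB x y = true := by decide
  have h2 : ∀ x y : Fin 5, MBf x = some y → MBf y = some x := by decide
  exact ⟨h1, h2⟩

lemma popA_M0f : Popular instA M0f := by
  intro M' hM'
  have hC := isMatchC_of instA rfl M' hM'
  rw [margin_eq instA rkA rfl hWFA M0f M']
  rcases classify M' hC with h|h|h|h|h|h|h <;> subst h <;> decide

lemma popB_M0f : Popular instB M0f := by
  intro M' hM'
  have hC := isMatchC_of instB rfl M' hM'
  rw [margin_eq instB rkB rfl hWFB M0f M']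
  rcases classify M' hC with h|h|h|h|h|h|h <;> subst h <;> decide

lemma noCommonDominant :
    ¬ ∃ M, IsMatching instA M ∧ Dominant instA M ∧ Dominant instB M := by
  rintro ⟨M, hM, ⟨hpA, hdA⟩, hpB, hdB⟩
  have hC := isMatchC_of instA rfl M hM
  rcases classify M hC with h|h|h|h|h|h|h <;> subst h
  · -- empty matching: loses dominance in A against MAf
    have := hdA MAf isMatchingA_MAf (by decide)
    rw [margin_eq instA rkA rfl hWFA] at this
    exact absurd this (by decide)
  · -- M0f: margin 0 against MAf, not dominant in A
    have := hdA MAf isMatchingA_MAf (by decide)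
    rw [margin_eq instA rkA rfl hWFA] at this
    exact absurd this (by decide)
  · -- {0-3}: loses dominance in A against MAf
    have := hdA MAf isMatchingA_MAf (by decide)
    rw [margin_eq instA rkA rfl hWFA] at this
    exact absurd this (by decide)
  · -- {0-4}: not popular in A
    have := hpA MAf isMatchingA_MAf
    rw [margin_eq instA rkA rfl hWFA] at this
    exact absurd this (by decide)
  · -- {1-2}: loses dominance in A against MAf
    have := hdA MAf isMatchingA_MAf (by decide)
    rw [margin_eq instA rkA rfl hWFA] at this
    exact absurd this (by decide)
  · -- MAf: not popular in B
    have := hpB MBf isMatchingB_MBf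
    rw [margin_eq instB rkB rfl hWFB] at this
    exact absurd this (by decide)
  · -- MBf: not popular in A
    have := hpA MAf isMatchingA_MAf
    rw [margin_eq instA rkA rfl hWFA] at this
    exact absurd this (by decide)

lemma maximality (M' : Fin 5 → Option (Fin 5)) (hM' : IsMatching instA M')
    (hpA : Popular instA M') (hpB : Popular instB M') : msize M' ≤ msize M0f := by
  have hC := isMatchC_of instA rfl M' hM'
  rcases classify M' hC with h|h|h|h|h|h|h <;> subst h
  · decide
  · decide
  · decide
  · decide
  · decide
  · -- MAf is not popular in B
    have := hpB MBf isMatchingB_MBf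
    rw [margin_eq instB rkB rfl hWFB] at this
    exact absurd this (by decide)
  · -- MBf is not popular in A
    have := hpA MAf isMatchingA_MAf
    rw [margin_eq instA rkA rfl hWFA] at this
    exact absurd this (by decide)

lemma notDominantA_M0f : ¬ (Dominant instA M0f ∧ Dominant instB M0f) := by
  rintro ⟨⟨-, hd⟩, -⟩
  have := hd MAf isMatchingA_MAf (by decide)
  rw [margin_eq instA rkA rfl hWFA] at this
  exact absurd this (by decide)

end Counterexample

/-- There exist two MatP instances on the same graph, differing only by a swap
of two adjacent alternatives in the preference order of a single agent, that
admit a robust popular matching but no robust dominant matching; consequently a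
maximum-size robust popular matching need not be a robust dominant matching. -/
theorem exists_robust_popular_no_robust_dominant :
    ∃ (n : ℕ) (IA IB : MatP (Fin n)) (x : Fin n),
      SameExcept IA IB x ∧
      (∃ y y', IA.pref x y y' ∧ IB.pref x y' y ∧
        (∀ u v, ¬((u = y ∧ v = y') ∨ (u = y' ∧ v = y)) →
          (IA.pref x u v ↔ IB.pref x u v))) ∧
      (∃ M, IsMatching IA M ∧ Popular IA M ∧ Popular IB M) ∧
      (¬ ∃ M, IsMatching IA M ∧ Dominant IA M ∧ Dominant IB M) ∧
      (∃ M, IsMatching IA M ∧ Popular IA M ∧ Popular IB M ∧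
        (∀ M', IsMatching IA M' → Popular IA M' → Popular IB M' →
          msize M' ≤ msize M) ∧
        ¬ (Dominant IA M ∧ Dominant IB M)) := by
  refine ⟨5, instA, instB, 0, ⟨rfl, rfl, rfl, ?_⟩, ⟨3, 4, ?_, ?_, ?_⟩, ?_, ?_, ?_⟩
  · have h : ∀ z : Fin 5, z ≠ 0 → ∀ u v, (prefP rkA z u v ↔ prefP rkB z u v) := by decide
    exact h
  · have h : prefP rkA 0 3 4 := by decide
    exact h
  · have h : prefP rkB 0 4 3 := by decide
    exact h
  · have h : ∀ u v : Fin 5, ¬((u = 3 ∧ v = 4) ∨ (u = 4 ∧ v = 3)) →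
        (prefP rkA 0 u v ↔ prefP rkB 0 u v) := by decide
    exact h
  · exact ⟨M0f, isMatchingA_M0f, popA_M0f, popB_M0f⟩
  · exact noCommonDominant
  · exact ⟨M0f, isMatchingA_M0f, popA_M0f, popB_M0f, maximality, notDominantA_M0f⟩
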